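/- Let u : ℝⁿ → ℂ be a Schwartz function whose Fourier transform û is supported in the set {ξ ∈ ℝⁿ : |ξ| ≥ r} for some r > 0. Then ‖∇u‖_{L²(ℝⁿ)} ≥ r · ‖u‖_{L²(ℝⁿ)}, where ‖∇u‖²_{L²} = Σ_{j=1}^n ‖∂_{x_j} u‖²_{L²}. -/

import Mathlib

open MeasureTheory

/-- The Fourier transform `û(ξ) = ∫ e^{-i x·ξ} u(x) dx`, with the classical
normalization in which `∂_j u` corresponds to `i ξ_j û` (Plancherel holds up to
the fixed constant `(2π)^n`). -/
noncomputable def fourierInt {n : ℕ} (f : EuclideanSpace ℝ (Fin n) → ℂ)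
    (ξ : EuclideanSpace ℝ (Fin n)) : ℂ :=
  ∫ x : EuclideanSpace ℝ (Fin n),
    Complex.exp (-(Complex.I * ((inner ℝ x ξ : ℝ) : ℂ))) * f x

/-!
By Plancherel, `∫ ‖u‖²` and `∫ ∑ⱼ ‖∂ⱼ u‖²` equal `∫ ‖𝓕 u‖²` and `∫ ∑ⱼ ‖𝓕 (∂ⱼ u)‖²`, and
`𝓕 (∂_m u) ξ = 2πi ⟪ξ, m⟫ 𝓕 u ξ`, so summing over an orthonormal basis of directions gives
`∑ⱼ ‖𝓕 (∂ⱼ u) ξ‖² = (2π‖ξ‖)² ‖𝓕 u ξ‖²`. On the support of `𝓕 u` this is at least `r² ‖𝓕 u ξ‖²`;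
integrate. Mathlib's `𝓕` uses `e^{-2πi⟪x, ξ⟫}`, so `𝓕 u ξ = fourierInt u (2πξ)` and the support
condition becomes `r ≤ 2π‖ξ‖`.
-/

open Real FourierTransform LineDeriv
open scoped RealInnerProductSpace

theorem fourierInt_two_pi_smul {n : ℕ} (f : EuclideanSpace ℝ (Fin n) → ℂ)
    (ξ : EuclideanSpace ℝ (Fin n)) : fourierInt f ((2 * π) • ξ) = 𝓕 f ξ := by
  rw [Real.fourier_eq', fourierInt]
  congr 1 with x
  rw [real_inner_smul_right, smul_eq_mul]
  push_cast
  ring_nf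

namespace SchwartzMap

theorem integrable_norm_sq {E F : Type*} [NormedAddCommGroup E] [NormedSpace ℝ E]
    [NormedAddCommGroup F] [NormedSpace ℝ F] [MeasurableSpace E] [BorelSpace E]
    [SecondCountableTopologyEither E F] {μ : Measure E} [μ.HasTemperateGrowth] (f : 𝓢(E, F)) :
    Integrable (fun x ↦ ‖f x‖ ^ 2) μ :=
  (f.memLp 2 μ).integrable_norm_pow two_ne_zero

variable {V H : Type*} [NormedAddCommGroup V] [InnerProductSpace ℝ V] [FiniteDimensional ℝ V]
  [MeasurableSpace V] [BorelSpace V] [NormedAddCommGroup H] [InnerProductSpace ℂ H]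

theorem norm_fourier_lineDerivOp_apply (f : 𝓢(V, H)) (m ξ : V) :
    ‖𝓕 (∂_{m} f) ξ‖ = 2 * π * |⟪ξ, m⟫| * ‖𝓕 f ξ‖ := by
  have : (inner ℝ · m).HasTemperateGrowth := ((innerSL ℝ).flip m).hasTemperateGrowth
  simp [fourier_lineDerivOp_eq, this, norm_smul, pi_pos.le, mul_assoc]

theorem sum_norm_sq_fourier_lineDerivOp {ι : Type*} [Fintype ι] (b : OrthonormalBasis ι ℝ V)
    (f : 𝓢(V, H)) (ξ : V) :
    ∑ j, ‖𝓕 (∂_{b j} f) ξ‖ ^ 2 = (2 * π * ‖ξ‖) ^ 2 * ‖𝓕 f ξ‖ ^ 2 := by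
  simp_rw [norm_fourier_lineDerivOp_apply, mul_pow, sq_abs, ← Finset.sum_mul, ← Finset.mul_sum,
    b.sum_sq_inner_left]

variable [CompleteSpace H]

theorem sq_mul_integral_norm_sq_le_integral_sum_norm_sq_lineDerivOp {ι : Type*} [Fintype ι]
    (b : OrthonormalBasis ι ℝ V) (f : 𝓢(V, H)) {r : ℝ} (hr : 0 ≤ r)
    (hsupp : Function.support (𝓕 (f : V → H)) ⊆ {ξ | r ≤ 2 * π * ‖ξ‖}) :
    r ^ 2 * ∫ x, ‖f x‖ ^ 2 ≤ ∫ x, ∑ j, ‖∂_{b j} f x‖ ^ 2 := by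
  have hpoint (ξ : V) : r ^ 2 * ‖𝓕 f ξ‖ ^ 2 ≤ ∑ j, ‖𝓕 (∂_{b j} f) ξ‖ ^ 2 := by
    rw [sum_norm_sq_fourier_lineDerivOp]
    by_cases hξ : 𝓕 f ξ = 0
    · simp [hξ]
    · gcongr
      exact hsupp hξ
  calc r ^ 2 * ∫ x, ‖f x‖ ^ 2
      = ∫ ξ, r ^ 2 * ‖𝓕 f ξ‖ ^ 2 := by rw [integral_const_mul, integral_norm_sq_fourier]
    _ ≤ ∫ ξ, ∑ j, ‖𝓕 (∂_{b j} f) ξ‖ ^ 2 :=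
        integral_mono ((𝓕 f).integrable_norm_sq.const_mul _)
          (integrable_finsetSum _ fun j _ ↦ (𝓕 (∂_{b j} f)).integrable_norm_sq) hpoint
    _ = ∫ x, ∑ j, ‖∂_{b j} f x‖ ^ 2 := by
        rw [integral_finsetSum _ fun j _ ↦ (𝓕 (∂_{b j} f)).integrable_norm_sq,
          integral_finsetSum _ fun j _ ↦ (∂_{b j} f).integrable_norm_sq]
        simp only [integral_norm_sq_fourier]

end SchwartzMap

/-- If `u` is a Schwartz function on `ℝⁿ` whose Fourier
transform is supported in `{ξ : |ξ| ≥ r}` for some `r > 0`, then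
`‖∇u‖_{L²} ≥ r ‖u‖_{L²}`, where `‖∇u‖²_{L²} = Σ_j ‖∂_{x_j} u‖²_{L²}`
(stated with squared `L²` norms). -/
theorem bernstein_high_frequency
    {n : ℕ} (u : SchwartzMap (EuclideanSpace ℝ (Fin n)) ℂ) (r : ℝ) (hr : 0 < r)
    (hsupp : Function.support (fourierInt (⇑u)) ⊆ {ξ : EuclideanSpace ℝ (Fin n) | r ≤ ‖ξ‖}) :
    r ^ 2 * (∫ x : EuclideanSpace ℝ (Fin n), ‖u x‖ ^ 2) ≤
      ∫ x : EuclideanSpace ℝ (Fin n),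
        ∑ j : Fin n, ‖fderiv ℝ (⇑u) x (EuclideanSpace.single j 1)‖ ^ 2 := by
  have hsupp_fourier :
      Function.support (𝓕 (u : EuclideanSpace ℝ (Fin n) → ℂ)) ⊆ {ξ | r ≤ 2 * π * ‖ξ‖} := by
    intro ξ hξ
    have h : r ≤ ‖(2 * π) • ξ‖ := hsupp (by rwa [Function.mem_support, fourierInt_two_pi_smul])
    rwa [norm_smul, Real.norm_of_nonneg two_pi_pos.le] at h
  simpa only [EuclideanSpace.basisFun_apply, SchwartzMap.lineDerivOp_apply_eq_fderiv] using
    u.sq_mul_integral_norm_sq_le_integral_sum_norm_sq_lineDerivOp (EuclideanSpace.basisFun _ ℝ)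
      hr.le hsupp_fourier
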